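/- Define the regularized three-body Hamiltonian 𝓗₀^E(x, y, ξ, η) = |η|²/(8α₁α₂) − |ξ|² (E + α₁/|α₂ξ² − x| + α₂/|α₁ξ² + x| − |y|²/2) for x, ξ ∈ ℂ, y, η ∈ ℂ, α₁ + α₂ = 1, α₁, α₂ > 0. Then every point of M_E = {(x, y, 0, 0) : |y|²/2 − 1/|x| < E, x ≠ 0} is a critical point of 𝓗₀^E with 𝓗₀^E = 0 there, and the Hessian of 𝓗₀^E at such a point, restricted to the (ξ, η)-variables, is the quadratic form |η|²/(4α₁α₂) − 2(E + 1/|x| − |y|²/2)|ξ|², which is nondegenerate with eigenvalue structure giving linearization eigenvalues ±√((E + 1/|x| − |y|²/2)/(2α₁α₂)). -/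

import Mathlib

/-- The regularized three-body Hamiltonian
`𝓗₀^E(x, y, ξ, η) = |η|²/(8α₁α₂) − |ξ|²(E + α₁/|α₂ξ² − x| + α₂/|α₁ξ² + x| − |y|²/2)`. -/
noncomputable def H3body (α₁ α₂ E : ℝ) (z : ℂ × ℂ × ℂ × ℂ) : ℝ :=
  ‖z.2.2.2‖ ^ 2 / (8*α₁*α₂) -
    ‖z.2.2.1‖ ^ 2 *
      (E + α₁ / ‖(α₂:ℂ) * z.2.2.1^2 - z.1‖
         + α₂ / ‖(α₁:ℂ) * z.2.2.1^2 + z.1‖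
         - ‖z.2.1‖ ^ 2 / 2)

/-
On `M_E`, write `𝓗₀^E = ‖η‖² (8α₁α₂)⁻¹ − ‖ξ‖² K`, where `K` is smooth near `ξ = 0` (as `x ≠ 0`) and,
because `α₁ + α₂ = 1`, takes the value `c = E + 1/‖x‖ − ‖y‖²/2` at `(x, y, 0, 0)`. Both `‖η‖²` and
`‖ξ‖²` vanish there together with their first derivatives, so by the product rule the gradient
vanishes and the Hessian is `(8α₁α₂)⁻¹ D²‖η‖² − c D²‖ξ‖² = 2⟪η, η'⟫/(8α₁α₂) − 2c⟪ξ, ξ'⟫`.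
On `M_E` we have `c > 0`, which makes this form nondegenerate; the linearization
`(ξ, η) ↦ (η/(4α₁α₂), 2cξ)` has the eigenvectors `(v, ±4α₁α₂ν v)`.
-/

section MulVanishing

variable {𝕜 E : Type*} [NontriviallyNormedField 𝕜] [NormedAddCommGroup E] [NormedSpace 𝕜 E]
  {g K : E → 𝕜} {p : E}

theorem fderiv_fun_mul_eq_zero_of_eq_zero_of_fderiv_eq_zero (hg : DifferentiableAt 𝕜 g p)
    (hK : DifferentiableAt 𝕜 K p) (hg₀ : g p = 0) (hg₁ : fderiv 𝕜 g p = 0) :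
    fderiv 𝕜 (fun z => g z * K z) p = 0 := by
  ext v
  simp [fderiv_fun_mul hg hK, hg₀, hg₁]

theorem iteratedFDeriv_two_fun_mul_of_eq_zero_of_fderiv_eq_zero (hg : ContDiffAt 𝕜 2 g p)
    (hK : ContDiffAt 𝕜 2 K p) (hg₀ : g p = 0) (hg₁ : fderiv 𝕜 g p = 0) :
    iteratedFDeriv 𝕜 2 (fun z => g z * K z) p = K p • iteratedFDeriv 𝕜 2 g p := by
  have hD : fderiv 𝕜 (fun z => g z * K z) =ᶠ[nhds p]
      fun z => g z • fderiv 𝕜 K z + K z • fderiv 𝕜 g z := by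
    filter_upwards [hg.eventually (by simp), hK.eventually (by simp)] with z hgz hKz
    exact fderiv_fun_mul (hgz.differentiableAt (by simp)) (hKz.differentiableAt (by simp))
  have hg' : DifferentiableAt 𝕜 (fderiv 𝕜 g) p :=
    (hg.fderiv_right (m := 1) (by norm_num)).differentiableAt (by simp)
  have hK' : DifferentiableAt 𝕜 (fderiv 𝕜 K) p :=
    (hK.fderiv_right (m := 1) (by norm_num)).differentiableAt (by simp)
  have hDD : HasFDerivAt (fun z => g z • fderiv 𝕜 K z + K z • fderiv 𝕜 g z)
      (K p • fderiv 𝕜 (fderiv 𝕜 g) p) p := by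
    refine (((hg.differentiableAt (by simp)).hasFDerivAt.smul hK'.hasFDerivAt).add
      ((hK.differentiableAt (by simp)).hasFDerivAt.smul hg'.hasFDerivAt)).congr_fderiv ?_
    rw [hg₀, hg₁]
    simp
  ext m
  simp only [iteratedFDeriv_two_apply, hD.fderiv_eq, hDD.fderiv, smul_apply]

end MulVanishing

section NormSq

variable {E F : Type*} [NormedAddCommGroup E] [NormedSpace ℝ E]
  [NormedAddCommGroup F] [InnerProductSpace ℝ F] (π : E →L[ℝ] F)

theorem fderiv_norm_sq_comp_eq_zero {p : E} (hp : π p = 0) :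
    fderiv ℝ (fun z => ‖π z‖ ^ 2) p = 0 := by
  simp [π.hasFDerivAt.norm_sq.fderiv, hp]

theorem iteratedFDeriv_two_norm_sq_comp (p w w' : E) :
    iteratedFDeriv ℝ 2 (fun z => ‖π z‖ ^ 2) p ![w, w'] = 2 * inner ℝ (π w) (π w') := by
  have hD : fderiv ℝ (fun z => ‖π z‖ ^ 2) = ⇑((2 : ℝ) • (innerSL ℝ).bilinearComp π π) := by
    ext z v
    simp [π.hasFDerivAt.norm_sq.fderiv]
  rw [iteratedFDeriv_two_apply, hD, ContinuousLinearMap.fderiv]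
  simp

end NormSq

theorem exists_swap_smul_eigenvector {K V : Type*} [Field K] [AddCommGroup V] [Module K V]
    [Nontrivial V] {a b ν : K} (ha : a ≠ 0) (h : a * b = ν ^ 2) :
    ∃ v : V × V, v ≠ 0 ∧ (a • v.2, b • v.1) = ν • v := by
  obtain ⟨v, hv⟩ := exists_ne (0 : V)
  refine ⟨(v, (ν / a) • v), fun h0 => hv (congrArg Prod.fst h0), ?_⟩
  have hb : b = ν * (ν / a) := by field_simp; linear_combination h
  simp [smul_smul, mul_div_cancel₀ _ ha, hb]

noncomputable section H3bodyHessian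

def projXi : ℂ × ℂ × ℂ × ℂ →L[ℝ] ℂ :=
  (ContinuousLinearMap.fst ℝ ℂ ℂ).comp
    ((ContinuousLinearMap.snd ℝ ℂ (ℂ × ℂ)).comp (ContinuousLinearMap.snd ℝ ℂ (ℂ × ℂ × ℂ)))

def projEta : ℂ × ℂ × ℂ × ℂ →L[ℝ] ℂ :=
  (ContinuousLinearMap.snd ℝ ℂ ℂ).comp
    ((ContinuousLinearMap.snd ℝ ℂ (ℂ × ℂ)).comp (ContinuousLinearMap.snd ℝ ℂ (ℂ × ℂ × ℂ)))

def H3bodyWeight (α₁ α₂ E : ℝ) (z : ℂ × ℂ × ℂ × ℂ) : ℝ :=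
  E + α₁ / ‖(α₂:ℂ) * z.2.2.1^2 - z.1‖ + α₂ / ‖(α₁:ℂ) * z.2.2.1^2 + z.1‖ - ‖z.2.1‖ ^ 2 / 2

variable {α₁ α₂ E : ℝ} {x y : ℂ}

theorem H3body_eq : H3body α₁ α₂ E = fun z =>
    ‖projEta z‖ ^ 2 * (8*α₁*α₂)⁻¹ - ‖projXi z‖ ^ 2 * H3bodyWeight α₁ α₂ E z := by
  funext z
  rw [H3body, div_eq_mul_inv]
  rfl

theorem H3bodyWeight_apply (hsum : α₁ + α₂ = 1) :
    H3bodyWeight α₁ α₂ E (x, y, 0, 0) = E + 1 / ‖x‖ - ‖y‖ ^ 2 / 2 := by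
  have h : α₁ / ‖x‖ + α₂ / ‖x‖ = 1 / ‖x‖ := by rw [← add_div, hsum]
  simp only [H3bodyWeight, ne_eq, OfNat.ofNat_ne_zero, not_false_eq_true, zero_pow, mul_zero,
    zero_sub, norm_neg, zero_add]
  linarith

theorem contDiffAt_H3bodyWeight (hx : x ≠ 0) :
    ContDiffAt ℝ 2 (H3bodyWeight α₁ α₂ E) (x, y, 0, 0) := by
  have hx' : ‖x‖ ≠ 0 := norm_ne_zero_iff.mpr hx
  have h₁ : ContDiffAt ℝ 2 (fun z : ℂ × ℂ × ℂ × ℂ => ‖(α₂:ℂ) * z.2.2.1^2 - z.1‖) (x, y, 0, 0) :=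
    (contDiffAt_norm ℝ (by simpa using hx)).comp _ (by fun_prop)
  have h₂ : ContDiffAt ℝ 2 (fun z : ℂ × ℂ × ℂ × ℂ => ‖(α₁:ℂ) * z.2.2.1^2 + z.1‖) (x, y, 0, 0) :=
    (contDiffAt_norm ℝ (by simpa using hx)).comp _ (by fun_prop)
  have h₃ : ContDiffAt ℝ 2 (fun z : ℂ × ℂ × ℂ × ℂ => ‖z.2.1‖ ^ 2 / 2) (x, y, 0, 0) :=
    ((contDiff_norm_sq ℝ).comp contDiff_snd.fst).contDiffAt.div_const 2
  exact ((contDiffAt_const.add (contDiffAt_const.div h₁ (by simpa using hx'))).add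
    (contDiffAt_const.div h₂ (by simpa using hx'))).sub h₃

theorem fderiv_H3body (hx : x ≠ 0) : fderiv ℝ (H3body α₁ α₂ E) (x, y, 0, 0) = 0 := by
  have hXi : ContDiff ℝ 2 (fun z => ‖projXi z‖ ^ 2) := (contDiff_norm_sq ℝ).comp projXi.contDiff
  have hEta : ContDiff ℝ 2 (fun z => ‖projEta z‖ ^ 2) := (contDiff_norm_sq ℝ).comp projEta.contDiff
  have hK := (contDiffAt_H3bodyWeight (α₁ := α₁) (α₂ := α₂) (E := E) (y := y) hx).differentiableAt
    (by simp)
  rw [H3body_eq, fderiv_fun_sub ((hEta.differentiable (by simp)).differentiableAt.mul_const _)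
      ((hXi.differentiable (by simp)).differentiableAt.fun_mul hK),
    fderiv_fun_mul_eq_zero_of_eq_zero_of_fderiv_eq_zero
      (hEta.differentiable (by simp)).differentiableAt (differentiableAt_const _)
      (by simp [projEta]) (fderiv_norm_sq_comp_eq_zero _ (by simp [projEta])),
    fderiv_fun_mul_eq_zero_of_eq_zero_of_fderiv_eq_zero
      (hXi.differentiable (by simp)).differentiableAt hK
      (by simp [projXi]) (fderiv_norm_sq_comp_eq_zero _ (by simp [projXi])), sub_zero]

theorem iteratedFDeriv_two_H3body (hx : x ≠ 0) (w w' : ℂ × ℂ × ℂ × ℂ) :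
    iteratedFDeriv ℝ 2 (H3body α₁ α₂ E) (x, y, 0, 0) ![w, w'] =
      (8*α₁*α₂)⁻¹ * (2 * inner ℝ w.2.2.2 w'.2.2.2)
        - H3bodyWeight α₁ α₂ E (x, y, 0, 0) * (2 * inner ℝ w.2.2.1 w'.2.2.1) := by
  have hXi : ContDiff ℝ 2 (fun z => ‖projXi z‖ ^ 2) := (contDiff_norm_sq ℝ).comp projXi.contDiff
  have hEta : ContDiff ℝ 2 (fun z => ‖projEta z‖ ^ 2) := (contDiff_norm_sq ℝ).comp projEta.contDiff
  have hK := contDiffAt_H3bodyWeight (α₁ := α₁) (α₂ := α₂) (E := E) (y := y) hx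
  rw [H3body_eq, fun_iteratedFDeriv_sub_apply (hEta.contDiffAt.mul contDiffAt_const)
      (hXi.contDiffAt.mul hK),
    iteratedFDeriv_two_fun_mul_of_eq_zero_of_fderiv_eq_zero hEta.contDiffAt contDiffAt_const
      (by simp [projEta]) (fderiv_norm_sq_comp_eq_zero _ (by simp [projEta])),
    iteratedFDeriv_two_fun_mul_of_eq_zero_of_fderiv_eq_zero hXi.contDiffAt hK
      (by simp [projXi]) (fderiv_norm_sq_comp_eq_zero _ (by simp [projXi]))]
  simp only [sub_apply, smul_apply, iteratedFDeriv_two_norm_sq_comp, smul_eq_mul]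
  rfl

end H3bodyHessian

/-- Points of `M_E = {(x, y, 0, 0) : |y|²/2 − 1/|x| < E}` are critical points of `𝓗₀^E`
with value `0`; the Hessian restricted to the `(ξ, η)`-variables is the nondegenerate
quadratic form `|η|²/(4α₁α₂) − 2(E + 1/|x| − |y|²/2)|ξ|²`, whose Hamiltonian linearization
has real eigenvalues `±√((E + 1/|x| − |y|²/2)/(2α₁α₂))`. -/
theorem stmt15 (α₁ α₂ E : ℝ) (hα₁ : 0 < α₁) (hα₂ : 0 < α₂) (hsum : α₁ + α₂ = 1)
    (x y : ℂ) (hx : x ≠ 0)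
    (hM : ‖y‖ ^ 2 / 2 - 1 / ‖x‖ < E)
    (c : ℝ) (hc : c = E + 1 / ‖x‖ - ‖y‖ ^ 2 / 2)
    (ν : ℝ) (hν : ν = Real.sqrt (c / (2*α₁*α₂))) :
    H3body α₁ α₂ E (x, y, 0, 0) = 0 ∧
    fderiv ℝ (H3body α₁ α₂ E) (x, y, 0, 0) = 0 ∧
    (∀ ξ η : ℂ,
      iteratedFDeriv ℝ 2 (H3body α₁ α₂ E) (x, y, 0, 0)
          ![((0:ℂ), (0:ℂ), ξ, η), ((0:ℂ), (0:ℂ), ξ, η)]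
        = ‖η‖ ^ 2 / (4*α₁*α₂) - 2 * c * ‖ξ‖ ^ 2) ∧
    (∀ ξ η : ℂ,
      (∀ ξ' η' : ℂ,
        iteratedFDeriv ℝ 2 (H3body α₁ α₂ E) (x, y, 0, 0)
            ![((0:ℂ), (0:ℂ), ξ, η), ((0:ℂ), (0:ℂ), ξ', η')] = 0) →
      ξ = 0 ∧ η = 0) ∧
    (∃ v : ℂ × ℂ, v ≠ 0 ∧
        ((1/(4*α₁*α₂)) • v.2, (2*c) • v.1) = ν • v) ∧
    (∃ w : ℂ × ℂ, w ≠ 0 ∧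
        ((1/(4*α₁*α₂)) • w.2, (2*c) • w.1) = (-ν) • w) := by
  have hc₀ : 0 < c := by rw [hc]; linarith
  have hα : 0 < α₁ * α₂ := mul_pos hα₁ hα₂
  have hHess (w w' : ℂ × ℂ × ℂ × ℂ) := iteratedFDeriv_two_H3body (α₁ := α₁) (α₂ := α₂) (E := E)
    (y := y) hx w w'
  rw [H3bodyWeight_apply hsum, ← hc] at hHess
  have hν₂ : 1 / (4*α₁*α₂) * (2*c) = ν ^ 2 := by
    rw [hν, Real.sq_sqrt (by positivity)]
    field_simp
    ring
  refine ⟨by simp [H3body], fderiv_H3body hx, fun ξ η => ?_, fun ξ η h => ?_,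
    exists_swap_smul_eigenvector (by positivity) hν₂,
    exists_swap_smul_eigenvector (by positivity) (hν₂.trans (neg_sq ν).symm)⟩
  · simp only [hHess, real_inner_self_eq_norm_sq]
    field_simp
    ring
  · have hξ := h ξ 0
    have hη := h 0 η
    simp only [hHess, real_inner_self_eq_norm_sq, inner_zero_right] at hξ hη
    exact ⟨by simpa [hc₀.ne'] using hξ, by simpa [hα₁.ne', hα₂.ne'] using hη⟩
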